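/- Let p, q, k, m be natural numbers with k ≤ p ≤ q ≤ m. If [m choose p]·2^{-[p choose k]} + [m choose q]·2^{-[q choose k]} < 1, then there exists a two-coloring of the △_k subsets of a triangular board with m levels such that no △_p has all of its △_k subsets in the first color and no △_q has all of its △_k subsets in the second color; hence R_1(p,q,k) > m. -/

import Mathlib

/-- The `n`-th triangular number. -/
def T (n : ℕ) : ℕ := n * (n + 1) / 2

/-- The bracket numbers, defined by the recursion
`[n, k] = [n-1, k] + C(n,k) * [n-1, k-1]` with `[n, 0] = 1` and `[n, n] = 1`. -/
def brack : ℕ → ℕ → ℕ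
  | _, 0 => 1
  | 0, _ + 1 => 0
  | n + 1, k + 1 =>
    if n + 1 = k + 1 then 1
    else brack n (k + 1) + Nat.choose (n + 1) (k + 1) * brack n k

/-- A `△_n` on the triangular board with `m` levels (positions are labeled `1, …, T m`
row by row, row `r` being the labels in `(T (r-1), T r]`): a selection of `n` rows in
increasing order together with `j + 1` positions from the `j`-th selected row. -/
structure BTri (m n : ℕ) where
  row : Fin n → ℕ
  mono : StrictMono row
  row_pos : ∀ j, 1 ≤ row j
  row_le : ∀ j, row j ≤ m
  cells : Fin n → Finset ℕ
  card_cells : ∀ j, (cells j).card = (j : ℕ) + 1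
  cells_mem : ∀ j, cells j ⊆ Finset.Ioc (T (row j - 1)) (T (row j))

/-- The set of positions of a `△_n` on the board. -/
def BTri.toSet {m n : ℕ} (Z : BTri m n) : Finset ℕ := Finset.univ.biUnion Z.cells

/-- `S ≤ Z`: the `△_k` `S` is contained in the `△_n` `Z` in the level-respecting order,
i.e. each level of `S` is contained in a single distinct level of `Z`, in increasing order. -/
def BTri.le {m k n : ℕ} (S : BTri m k) (Z : BTri m n) : Prop :=
  ∃ e : Fin k → Fin n, StrictMono e ∧ ∀ j, S.cells j ⊆ Z.cells (e j)

/-- The triangular Ramsey number `R₁(p, q, k)`: the least `m ≥ max p q` such that every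
two-coloring of the `△_k`'s on the board with `m` levels contains a `△_p` all of whose
`△_k`'s are in color one, or a `△_q` all of whose `△_k`'s are in color two. -/
noncomputable def R1 (p q k : ℕ) : ℕ :=
  sInf {m | max p q ≤ m ∧ ∀ χ : Finset ℕ → Bool,
    (∃ Z : BTri m p, ∀ S : BTri m k, S.le Z → χ S.toSet = true) ∨
    (∃ Z : BTri m q, ∀ S : BTri m k, S.le Z → χ S.toSet = false)}

/-!
Color the `△_k`'s independently and uniformly at random. A `△_n` contains `[n, k]` of them and
the board contains `[m, n]` `△_n`'s, so the hypothesis says that the expected number of `△_p`'s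
all of whose `△_k`'s have the first color, plus that of `△_q`'s all of whose `△_k`'s have the
second, is below one; hence some coloring has neither.

For `m < R₁(p, q, k)` one also needs the set in the definition of `R₁` to be nonempty, as
`sInf ∅ = 0`. This is a Ramsey statement: encoding a `△_k` by an increasing tuple of naturals
so that sub-triangles correspond to sub-tuples, the infinite Ramsey theorem gives, for each
coloring, a board size with a monochromatic triangle, and compactness of `Finset ℕ → Bool`
makes the size uniform.
-/

lemma strictMono_snoc {α : Type*} [Preorder α] {k : ℕ} {g : Fin k → α} {a : α}
    (hg : StrictMono g) (ha : ∀ j, g j < a) : StrictMono (Fin.snoc g a : Fin (k + 1) → α) := by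
  intro i j hij
  induction j using Fin.lastCases with
  | last =>
    obtain ⟨i, rfl⟩ := Fin.exists_castSucc_eq.2 (Fin.ne_last_of_lt hij)
    simpa using ha i
  | cast j =>
    obtain ⟨i, rfl⟩ :=
      Fin.exists_castSucc_eq.2 (Fin.ne_last_of_lt (hij.trans (Fin.castSucc_lt_last j)))
    simpa using hg (Fin.castSucc_lt_castSucc_iff.1 hij)

section TwoColoring

open Finset

variable {α : Type*} [Fintype α] [DecidableEq α]

lemma card_filter_forall_eq_mul_pow (s : Finset α) (b : Bool) :
    #{c : α → Bool | ∀ x ∈ s, c x = b} * 2 ^ #s = 2 ^ Fintype.card α := by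
  have hpi : ({c : α → Bool | ∀ x ∈ s, c x = b} : Finset _) =
      Fintype.piFinset fun x => if x ∈ s then {b} else univ := by
    ext c
    simp only [mem_filter, mem_univ, true_and, Fintype.mem_piFinset]
    refine forall_congr' fun x => ?_
    split_ifs with hx <;> simp [hx]
  rw [hpi, Fintype.card_piFinset]
  simp only [apply_ite Finset.card, card_singleton, card_univ, Fintype.card_bool, prod_ite,
    prod_const_one, one_mul, prod_const, ← pow_add]
  congr 1
  rw [← card_compl_add_card s]
  congr 2
  ext
  simp

lemma card_filter_exists_forall_le {ι : Type*} [Fintype ι] (A : ι → Finset α) (b : Bool) :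
    (#{c : α → Bool | ∃ i, ∀ x ∈ A i, c x = b} : ℝ) ≤
      (∑ i, (2⁻¹ : ℝ) ^ #(A i)) * 2 ^ Fintype.card α := by
  have hunion : ({c : α → Bool | ∃ i, ∀ x ∈ A i, c x = b} : Finset _) ⊆
      univ.biUnion fun i => {c | ∀ x ∈ A i, c x = b} := by
    intro c
    simp
  calc (#{c : α → Bool | ∃ i, ∀ x ∈ A i, c x = b} : ℝ)
      ≤ ∑ i, (#{c : α → Bool | ∀ x ∈ A i, c x = b} : ℝ) := by
        exact_mod_cast (card_le_card hunion).trans card_biUnion_le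
    _ = (∑ i, (2⁻¹ : ℝ) ^ #(A i)) * 2 ^ Fintype.card α := by
        rw [sum_mul]
        refine sum_congr rfl fun i _ => ?_
        have := congrArg (Nat.cast : ℕ → ℝ) (card_filter_forall_eq_mul_pow (A i) b)
        push_cast at this
        rw [inv_pow, ← this]
        field_simp

theorem exists_coloring_of_sum_lt_one {ι κ : Type*} [Fintype ι] [Fintype κ]
    (A : ι → Finset α) (B : κ → Finset α)
    (h : ∑ i, (2⁻¹ : ℝ) ^ #(A i) + ∑ j, (2⁻¹ : ℝ) ^ #(B j) < 1) :
    ∃ c : α → Bool, (¬∃ i, ∀ x ∈ A i, c x = true) ∧ ¬∃ j, ∀ x ∈ B j, c x = false := by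
  by_contra hcon
  have hcover : (univ : Finset (α → Bool)) ⊆
      ({c | ∃ i, ∀ x ∈ A i, c x = true} : Finset (α → Bool)) ∪
        ({c | ∃ j, ∀ x ∈ B j, c x = false} : Finset (α → Bool)) := by
    intro c _
    have := not_exists.1 hcon c
    simp only [mem_union, mem_filter, mem_univ, true_and]
    tauto
  have hcard : ((2 : ℝ) ^ Fintype.card α) ≤
      (∑ i, (2⁻¹ : ℝ) ^ #(A i) + ∑ j, (2⁻¹ : ℝ) ^ #(B j)) * 2 ^ Fintype.card α := by
    calc ((2 : ℝ) ^ Fintype.card α) = #(univ : Finset (α → Bool)) := by simp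
      _ ≤ #{c : α → Bool | ∃ i, ∀ x ∈ A i, c x = true}
          + #{c : α → Bool | ∃ j, ∀ x ∈ B j, c x = false} := by
        exact_mod_cast (card_le_card hcover).trans (card_union_le _ _)
      _ ≤ _ := by
        rw [add_mul]
        exact add_le_add (card_filter_exists_forall_le A true)
          (card_filter_exists_forall_le B false)
  exact (mul_lt_of_lt_one_left (by positivity) h).not_ge hcard

end TwoColoring

theorem exists_infinite_homogeneous_fin (r : ℕ) (φ : (Fin r → ℕ) → Bool) {X : Set ℕ}
    (hX : X.Infinite) : ∃ Y ⊆ X, Y.Infinite ∧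
      ∃ c, ∀ u : Fin r → ℕ, StrictMono u → (∀ i, u i ∈ Y) → φ u = c := by
  induction r generalizing X with
  | zero => exact ⟨X, subset_rfl, hX, φ Fin.elim0, fun u _ _ => congrArg φ (Subsingleton.elim _ _)⟩
  | succ r ih =>
    -- color `v` like `Fin.cons (sInf X') v` and pass to a homogeneous set above `sInf X'`
    have step (X' : Set ℕ) (hX' : X'.Infinite) := ih (fun v => φ (Fin.cons (sInf X') v))
      (hX'.sdiff (Set.finite_Iic (sInf X')))
    choose F hFsub hFinf C hC using step
    let g (t : ℕ) : {Y : Set ℕ // Y.Infinite} :=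
      (fun Y : {Y : Set ℕ // Y.Infinite} => ⟨F Y.1 Y.2, hFinf _ _⟩)^[t] ⟨X, hX⟩
    have g_succ (t : ℕ) : (g (t + 1)).1 = F (g t).1 (g t).2 :=
      congrArg Subtype.val (Function.iterate_succ_apply' ..)
    have g_anti : Antitone fun t => (g t).1 := antitone_nat_of_succ_le fun t => by
      rw [g_succ]; exact (hFsub _ _).trans Set.sdiff_subset
    let a (t : ℕ) : ℕ := sInf (g t).1
    have a_mem (t : ℕ) : a t ∈ (g t).1 := Nat.sInf_mem (g t).2.nonempty
    have a_lt {t y : ℕ} (hy : y ∈ (g (t + 1)).1) : a t < y := by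
      rw [g_succ] at hy
      simpa using (hFsub _ _ hy).2
    have a_strictMono : StrictMono a := strictMono_nat_of_lt_succ fun t => a_lt (a_mem _)
    obtain ⟨cI, hcI⟩ := Finite.exists_infinite_fiber fun t => C (g t).1 (g t).2
    refine ⟨a '' ((fun t => C (g t).1 (g t).2) ⁻¹' {cI}), ?_, ?_, cI, ?_⟩
    · rintro _ ⟨t, -, rfl⟩
      exact g_anti (Nat.zero_le t) (a_mem t)
    · exact (Set.infinite_coe_iff.1 hcI).image a_strictMono.injective.injOn
    · intro u hu huY
      obtain ⟨t, ht, hu0⟩ := huY 0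
      have htail (i : Fin r) : Fin.tail u i ∈ F (g t).1 (g t).2 := by
        obtain ⟨t', -, ht'⟩ := huY i.succ
        have : t < t' := a_strictMono.lt_iff_lt.1 (hu0 ▸ ht' ▸ hu (Fin.succ_pos i))
        rw [← g_succ, Fin.tail, ← ht']
        exact g_anti this (a_mem t')
      rw [← Fin.cons_self_tail u, ← hu0, ← ht]
      exact hC _ _ _ (hu.comp Fin.strictMono_succ) htail

theorem exists_infinite_homogeneous {ι : Type*} [Fintype ι] [LinearOrder ι] (φ : (ι → ℕ) → Bool)
    {X : Set ℕ} (hX : X.Infinite) : ∃ Y ⊆ X, Y.Infinite ∧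
      ∃ c, ∀ u : ι → ℕ, StrictMono u → (∀ i, u i ∈ Y) → φ u = c := by
  let e := Fintype.orderIsoFinOfCardEq ι rfl
  obtain ⟨Y, hYX, hY, c, hc⟩ := exists_infinite_homogeneous_fin _ (fun v => φ (v ∘ e.symm)) hX
  refine ⟨Y, hYX, hY, c, fun u hu huY => ?_⟩
  convert hc (u ∘ e) (hu.comp e.strictMono) fun i => huY (e i)
  ext
  simp

lemma isClosed_setOf_of_dependsOn {ι : Type*} {P : (ι → Bool) → Prop} {s : Set ι} (hs : s.Finite)
    (hP : DependsOn P s) : IsClosed {χ | P χ} := by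
  have : Finite s := hs
  have hpre : {χ | P χ} = s.domRestrict ⁻¹' (s.domRestrict '' {χ | P χ}) := by
    refine (Set.subset_preimage_image _ _).antisymm ?_
    rintro χ ⟨χ', hχ', heq⟩
    exact (hP fun i hi => congrFun heq ⟨i, hi⟩).mp hχ'
  rw [hpre]
  exact (isClosed_discrete _).preimage (continuous_pi fun _ => continuous_apply _)

theorem exists_forall_of_dependsOn {ι : Type*} {G : ℕ → (ι → Bool) → Prop} (hG : Monotone G)
    (hfin : ∀ M, ∃ s : Set ι, s.Finite ∧ DependsOn (G M) s) (hall : ∀ χ, ∃ M, G M χ) :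
    ∃ M, ∀ χ, G M χ := by
  by_contra! hcon
  have hclosed (M : ℕ) : IsClosed {χ | ¬G M χ} := by
    obtain ⟨s, hs, hGs⟩ := hfin M
    exact isClosed_setOf_of_dependsOn hs fun χ χ' h => by rw [hGs h]
  obtain ⟨χ, hχ⟩ := IsCompact.nonempty_iInter_of_sequence_nonempty_isCompact_isClosed
    (fun M => {χ | ¬G M χ}) (fun M χ hχ hGχ => hχ (hG M.le_succ χ hGχ)) hcon
    (hclosed 0).isCompact hclosed
  obtain ⟨M, hM⟩ := hall χ
  exact Set.mem_iInter.1 hχ M hM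

lemma T_succ (n : ℕ) : T (n + 1) = T n + (n + 1) := by
  unfold T
  rw [show (n + 1) * (n + 1 + 1) = n * (n + 1) + (n + 1) * 2 by ring,
    Nat.add_mul_div_right _ _ two_pos]

lemma T_mono : Monotone T :=
  monotone_nat_of_le_succ fun n => by rw [T_succ]; omega

lemma add_mem_Ioc_T {r a : ℕ} (ha : a < r) :
    T (r - 1) + 1 + a ∈ Finset.Ioc (T (r - 1)) (T r) := by
  obtain ⟨r, rfl⟩ : ∃ s, r = s + 1 := ⟨r - 1, by omega⟩
  simp only [Nat.add_sub_cancel, T_succ, Finset.mem_Ioc]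
  omega

lemma eq_of_mem_Ioc_T {r r' x : ℕ} (h : x ∈ Finset.Ioc (T (r - 1)) (T r))
    (h' : x ∈ Finset.Ioc (T (r' - 1)) (T r')) : r = r' := by
  simp only [Finset.mem_Ioc] at h h'
  by_contra hne
  rcases Nat.lt_or_gt_of_ne hne with hlt | hlt
  · have := T_mono (Nat.le_sub_one_of_lt hlt); omega
  · have := T_mono (Nat.le_sub_one_of_lt hlt); omega

namespace BTri

variable {m n k : ℕ}

lemma cells_nonempty (Z : BTri m n) (j : Fin n) : (Z.cells j).Nonempty := by
  rw [← Finset.card_pos, Z.card_cells]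
  omega

lemma row_eq_of_cells_subset {S : BTri m k} {Z : BTri m n} {j : Fin k} {i : Fin n}
    (h : S.cells j ⊆ Z.cells i) : S.row j = Z.row i := by
  obtain ⟨x, hx⟩ := S.cells_nonempty j
  exact eq_of_mem_Ioc_T (S.cells_mem j hx) (Z.cells_mem i (h hx))

lemma ext_cells {S Z : BTri m n} (h : ∀ j, S.cells j = Z.cells j) : S = Z := by
  have hrow : S.row = Z.row := funext fun j => row_eq_of_cells_subset (h j).le
  cases S; cases Z
  simp_all [funext_iff]

lemma mem_toSet {Z : BTri m n} {x : ℕ} : x ∈ Z.toSet ↔ ∃ j, x ∈ Z.cells j := by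
  simp [toSet]

lemma cells_eq_toSet_inter (Z : BTri m n) (j : Fin n) :
    Z.cells j = Z.toSet ∩ Finset.Ioc (T (Z.row j - 1)) (T (Z.row j)) := by
  ext x
  simp only [Finset.mem_inter, mem_toSet]
  refine ⟨fun hx => ⟨⟨j, hx⟩, Z.cells_mem j hx⟩, ?_⟩
  rintro ⟨⟨i, hi⟩, hx⟩
  rwa [← Z.mono.injective (eq_of_mem_Ioc_T (Z.cells_mem i hi) hx)]

lemma toSet_injective : Function.Injective (toSet : BTri m n → Finset ℕ) := by
  intro S Z h
  refine ext_cells fun j => ?_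
  obtain ⟨x, hx⟩ := S.cells_nonempty j
  obtain ⟨i, hi⟩ := mem_toSet.1 (h ▸ mem_toSet.2 ⟨j, hx⟩ : x ∈ Z.toSet)
  have hcells : S.cells j = Z.cells i := by
    rw [S.cells_eq_toSet_inter, Z.cells_eq_toSet_inter, h,
      eq_of_mem_Ioc_T (S.cells_mem j hx) (Z.cells_mem i hi)]
  have hji : j = i :=
    Fin.ext (by simpa [S.card_cells, Z.card_cells] using congrArg Finset.card hcells)
  rw [hcells, hji]

instance : Finite (BTri m n) := by
  refine Finite.of_injective (fun Z : BTri m n => fun j =>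
    (⟨Z.cells j, Finset.mem_powerset.2 fun x hx => ?_⟩ : (Finset.range (T m + 1)).powerset)) ?_
  · have := Finset.mem_Ioc.1 (Z.cells_mem j hx)
    have := T_mono (Z.row_le j)
    simp only [Finset.mem_range]
    omega
  · intro S Z h
    exact ext_cells fun j => congrArg Subtype.val (congrFun h j)

noncomputable instance : Fintype (BTri m n) := Fintype.ofFinite _

end BTri

lemma brack_zero_right (n : ℕ) : brack n 0 = 1 := by cases n <;> rfl

lemma brack_self (n : ℕ) : brack n n = 1 := by
  cases n with
  | zero => rfl
  | succ n => simp [brack]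

lemma brack_eq_zero_of_lt {n k : ℕ} (h : n < k) : brack n k = 0 := by
  induction n generalizing k with
  | zero => obtain ⟨k, rfl⟩ : ∃ j, k = j + 1 := ⟨k - 1, by omega⟩; rfl
  | succ n ih =>
    obtain ⟨k, rfl⟩ : ∃ j, k = j + 1 := ⟨k - 1, by omega⟩
    rw [brack, if_neg (by omega), ih (by omega), ih (by omega), Nat.mul_zero]

lemma brack_succ_succ (n k : ℕ) :
    brack (n + 1) (k + 1) = brack n (k + 1) + (n + 1).choose (k + 1) * brack n k := by
  rw [brack]
  split_ifs with h
  · obtain rfl : n = k := by omega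
    rw [brack_eq_zero_of_lt n.lt_succ_self, Nat.choose_self, brack_self]
  · rfl

lemma sum_strictMono_prod_choose (n k : ℕ) :
    ∑ e : Fin k → Fin n with StrictMono e, ∏ j, (e j + 1 : ℕ).choose (j + 1) = brack n k := by
  induction n generalizing k with
  | zero =>
    cases k with
    | zero => simp [Subsingleton.elim _ (Fin.elim0 : Fin 0 → Fin 0), brack_zero_right,
        Finset.filter_true_of_mem, Subsingleton.strictMono]
    | succ k => simp [Finset.univ_eq_empty, brack]
  | succ n ih =>
    cases k with
    | zero => simp [Finset.filter_true_of_mem, Subsingleton.strictMono, brack_zero_right]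
    | succ k =>
    rw [brack_succ_succ,
      ← Finset.sum_filter_not_add_sum_filter _ fun e => e (Fin.last k) = Fin.last n,
      Finset.filter_filter, Finset.filter_filter, ← ih, ← ih, Finset.mul_sum]
    congr 1
    · -- `e` misses the last row: it is a strictly monotone map into the first `n` rows
      refine Finset.sum_bij' (fun e he x => (e x).castPred ?_) (fun e _ => Fin.castSucc ∘ e)
        ?_ ?_ (fun e _ => by funext x; simp) (by simp) (by simp)
      · simp only [Finset.mem_filter] at he
        exact Fin.ne_last_of_lt ((he.2.1.monotone (Fin.le_last x)).trans_lt
          (Fin.lt_last_iff_ne_last.2 he.2.2))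
      · simp only [Finset.mem_filter, Finset.mem_univ, true_and]
        exact fun e he a b hab => by simpa using he.1 hab
      · simp only [Finset.mem_filter, Finset.mem_univ, true_and]
        exact fun e he => ⟨Fin.strictMono_castSucc.comp he, (Fin.castSucc_lt_last _).ne⟩
    · -- `e` ends in the last row, which has `n + 1` cells
      refine Finset.sum_bij' (fun e he x => (e x.castSucc).castPred ?_)
        (fun e _ => Fin.snoc (Fin.castSucc ∘ e) (Fin.last n)) ?_ ?_ ?_ (by simp) ?_
      · simp only [Finset.mem_filter] at he
        exact Fin.ne_last_of_lt (he.2.2 ▸ he.2.1 (Fin.castSucc_lt_last x))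
      · simp only [Finset.mem_filter, Finset.mem_univ, true_and]
        exact fun e he a b hab => by simpa using he.1 (Fin.castSucc_lt_castSucc_iff.2 hab)
      · simp only [Finset.mem_filter, Finset.mem_univ, true_and]
        exact fun e he => ⟨strictMono_snoc (Fin.strictMono_castSucc.comp he)
          fun j => Fin.castSucc_lt_last _, by simp⟩
      · intro e he
        simp only [Finset.mem_filter] at he
        funext x
        induction x using Fin.lastCases <;> simp [he.2.2]
      · intro e he
        simp only [Finset.mem_filter] at he
        simp [Fin.prod_univ_castSucc, he.2.2, mul_comm]

namespace BTri

variable {m n k : ℕ}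

/-- A sub-`△_k` of `Z`: the levels of `Z` it uses and the cells it takes in each of them. -/
abbrev SubData (Z : BTri m n) (k : ℕ) : Type :=
  Σ e : {e : Fin k → Fin n // StrictMono e}, ∀ j, (Z.cells (e.1 j)).powersetCard (j + 1)

def ofSubData (Z : BTri m n) (x : Z.SubData k) : {S : BTri m k // S.le Z} :=
  ⟨{ row := fun j => Z.row (x.1.1 j)
     mono := Z.mono.comp x.1.2
     row_pos := fun _ => Z.row_pos _
     row_le := fun _ => Z.row_le _
     cells := fun j => (x.2 j).1
     card_cells := fun j => (Finset.mem_powersetCard.1 (x.2 j).2).2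
     cells_mem := fun j => (Finset.mem_powersetCard.1 (x.2 j).2).1.trans (Z.cells_mem _) },
    x.1.1, x.1.2, fun j => (Finset.mem_powersetCard.1 (x.2 j).2).1⟩

lemma ofSubData_bijective (Z : BTri m n) : Function.Bijective (Z.ofSubData (k := k)) := by
  constructor
  · rintro ⟨e, c⟩ ⟨e', c'⟩ h
    obtain rfl : e = e' := Subtype.ext <| funext fun j =>
      Z.mono.injective (congrArg (fun S => S.1.row j) h)
    have : c = c' := funext fun j => Subtype.ext (congrArg (fun S => S.1.cells j) h)
    rw [this]
  · rintro ⟨S, e, he, hsub⟩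
    refine ⟨⟨⟨e, he⟩, fun j => ⟨S.cells j, Finset.mem_powersetCard.2 ⟨hsub j, S.card_cells j⟩⟩⟩,
      Subtype.ext (ext_cells fun j => rfl)⟩

lemma card_subtype_le (Z : BTri m n) : Nat.card {S : BTri m k // S.le Z} = brack n k := by
  rw [← Nat.card_eq_of_bijective _ Z.ofSubData_bijective, Nat.card_eq_fintype_card,
    Fintype.card_sigma, ← sum_strictMono_prod_choose, ← Finset.sum_subtype_eq_sum_filter]
  simp [Fintype.card_pi, Finset.card_powersetCard, Z.card_cells, Finset.subtype_univ]

def full (m : ℕ) : BTri m m where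
  row j := j + 1
  mono _ _ h := by simpa using h
  row_pos _ := Nat.le_add_left _ _
  row_le j := j.2
  cells j := Finset.Ioc (T j) (T (j + 1))
  card_cells j := by simp [T_succ]
  cells_mem j := by simp

lemma le_full (S : BTri m n) : S.le (full m) := by
  refine ⟨fun j => ⟨S.row j - 1, by have := S.row_pos j; have := S.row_le j; omega⟩,
    fun a b hab => ?_, fun j => ?_⟩
  · have := S.row_pos a; have := S.mono hab
    simp only [Fin.mk_lt_mk]; omega
  · have : S.row j - 1 + 1 = S.row j := Nat.sub_add_cancel (S.row_pos j)
    simpa [full, this] using S.cells_mem j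

lemma card_eq (m n : ℕ) : Fintype.card (BTri m n) = brack m n := by
  rw [Fintype.card_eq_nat_card, ← (full m).card_subtype_le]
  exact Nat.card_congr (Equiv.subtypeUnivEquiv le_full).symm

end BTri

def BTri.IsMonochromatic {m n : ℕ} (Z : BTri m n) (k : ℕ) (χ : Finset ℕ → Bool) (b : Bool) :
    Prop :=
  ∀ S : BTri m k, S.le Z → χ S.toSet = b

theorem exists_coloring_not_isMonochromatic (p q k m : ℕ)
    (h : (brack m p : ℝ) * 2 ^ (-(brack p k : ℝ)) +
      (brack m q : ℝ) * 2 ^ (-(brack q k : ℝ)) < 1) :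
    ∃ χ : Finset ℕ → Bool, (¬∃ Z : BTri m p, Z.IsMonochromatic k χ true) ∧
      ¬∃ Z : BTri m q, Z.IsMonochromatic k χ false := by
  classical
  let below {n : ℕ} (Z : BTri m n) : Finset (BTri m k) := {S | S.le Z}
  have card_below {n : ℕ} (Z : BTri m n) : (below Z).card = brack n k := by
    rw [← Fintype.card_subtype, Fintype.card_eq_nat_card, Z.card_subtype_le]
  obtain ⟨c, hp, hq⟩ := exists_coloring_of_sum_lt_one (fun Z : BTri m p => below Z)
    (fun Z : BTri m q => below Z) (by
      simpa [card_below, BTri.card_eq, Real.rpow_neg_natCast] using h)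
  refine ⟨Function.extend BTri.toSet c fun _ => false, ?_, ?_⟩
  · simpa [BTri.IsMonochromatic, below, BTri.toSet_injective.extend_apply] using hp
  · simpa [BTri.IsMonochromatic, below, BTri.toSet_injective.extend_apply] using hq

/-- A strictly increasing `u : Shape n → ℕ` encodes a `△_n`: its `j`-th level lies in row
`u ⟨j, j + 1⟩` and consists of the cells at positions `u ⟨j, i⟩`, `i ≤ j`, of that row.
The lexicographic order makes the encodings of the sub-`△_k`'s of that `△_n` exactly the
compositions `u ∘ σ` with `σ` strictly monotone, which is what Ramsey's theorem needs. -/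
abbrev Shape (n : ℕ) : Type := Σₗ j : Fin n, Fin (j + 2)

def encCells {n : ℕ} (u : Shape n → ℕ) (j : Fin n) : Finset ℕ :=
  Finset.univ.image fun i : Fin (j + 1) =>
    T (u (toLex ⟨j, Fin.last _⟩) - 1) + 1 + u (toLex ⟨j, i.castSucc⟩)

def encSet {n : ℕ} (u : Shape n → ℕ) : Finset ℕ := Finset.univ.biUnion (encCells u)

namespace BTri

variable {M n k : ℕ}

def ofEnc (u : Shape n → ℕ) (hu : StrictMono u) (hM : ∀ x, u x ≤ M) : BTri M n where
  row j := u (toLex ⟨j, Fin.last _⟩)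
  mono _ _ h := hu (Sigma.Lex.left _ _ h)
  row_pos _ := Nat.one_le_of_lt (hu (Sigma.Lex.right _ _ (Fin.castSucc_lt_last 0)))
  row_le _ := hM _
  cells := encCells u
  card_cells j := by
    refine (Finset.card_image_of_injective _ fun a b h => ?_).trans (by simp)
    simpa using hu.injective (Nat.add_left_cancel h)
  cells_mem j := Finset.image_subset_iff.2 fun i _ =>
    add_mem_Ioc_T (hu (Sigma.Lex.right _ _ (Fin.castSucc_lt_last i)))

lemma exists_strictMono_of_le_ofEnc {u : Shape n → ℕ} {hu : StrictMono u} {hM : ∀ x, u x ≤ M}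
    {S : BTri M k} (hS : S.le (ofEnc u hu hM)) :
    ∃ σ : Shape k → Shape n, StrictMono σ ∧ S.toSet = encSet (u ∘ σ) := by
  obtain ⟨e, he, hsub⟩ := hS
  let lbl (j : Fin k) (i : Fin (e j + 1)) : ℕ :=
    T (u (toLex ⟨e j, Fin.last _⟩) - 1) + 1 + u (toLex ⟨e j, i.castSucc⟩)
  have lbl_injective (j : Fin k) : Function.Injective (lbl j) := fun a b h => by
    simpa using hu.injective (Nat.add_left_cancel h)
  -- the positions, within level `e j` of the big triangle, of the cells of level `j` of `S`
  let I (j : Fin k) : Finset (Fin (e j + 1)) := {i | lbl j i ∈ S.cells j}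
  have image_I (j : Fin k) : (I j).image (lbl j) = S.cells j := by
    ext x
    simp only [I, Finset.mem_image, Finset.mem_filter, Finset.mem_univ, true_and]
    refine ⟨fun ⟨i, hi, hx⟩ => hx ▸ hi, fun hx => ?_⟩
    obtain ⟨i, -, rfl⟩ := Finset.mem_image.1 (hsub j hx)
    exact ⟨i, hx, rfl⟩
  have card_I (j : Fin k) : (I j).card = j + 1 := by
    rw [← Finset.card_image_of_injective _ (lbl_injective j), image_I, S.card_cells]
  let τ (j : Fin k) : Fin (j + 2) → Fin (e j + 2) :=
    Fin.snoc (Fin.castSucc ∘ (I j).orderEmbOfFin (card_I j)) (Fin.last _)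
  have τ_strictMono (j : Fin k) : StrictMono (τ j) :=
    strictMono_snoc (Fin.strictMono_castSucc.comp ((I j).orderEmbOfFin _).strictMono)
      fun _ => Fin.castSucc_lt_last _
  refine ⟨fun x => toLex ⟨e (ofLex x).1, τ _ (ofLex x).2⟩, ?_, ?_⟩
  · rintro ⟨j, a⟩ ⟨j', b⟩ (⟨_, _, h⟩ | ⟨_, _, h⟩)
    · exact Sigma.Lex.left _ _ (he h)
    · exact Sigma.Lex.right _ _ (τ_strictMono _ h)
  · refine Finset.biUnion_congr rfl fun j _ => ?_
    rw [← image_I, ← Finset.image_orderEmbOfFin_univ (I j) (card_I j), Finset.image_image]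
    simp only [encCells, Function.comp_apply, ofLex_toLex, Fin.snoc_last, Fin.snoc_castSucc, lbl, τ]
    rfl

end BTri

def BTri.lift {M M' n : ℕ} (h : M ≤ M') (Z : BTri M n) : BTri M' n :=
  { Z with row_le := fun j => (Z.row_le j).trans h }

lemma BTri.IsMonochromatic.lift {M M' n k : ℕ} {Z : BTri M n} {χ : Finset ℕ → Bool} {b : Bool}
    (hZ : Z.IsMonochromatic k χ b) (h : M ≤ M') : (Z.lift h).IsMonochromatic k χ b := by
  rintro S ⟨e, he, hsub⟩
  exact hZ { S with row_le := fun j => row_eq_of_cells_subset (hsub j) ▸ Z.row_le (e j) }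
    ⟨e, he, hsub⟩

def HasMonochromatic (p q k M : ℕ) (χ : Finset ℕ → Bool) : Prop :=
  (∃ Z : BTri M p, Z.IsMonochromatic k χ true) ∨ ∃ Z : BTri M q, Z.IsMonochromatic k χ false

lemma HasMonochromatic.mono {p q k M M' : ℕ} {χ : Finset ℕ → Bool} (h : M ≤ M')
    (hM : HasMonochromatic p q k M χ) : HasMonochromatic p q k M' χ :=
  hM.imp (fun ⟨Z, hZ⟩ => ⟨Z.lift h, hZ.lift h⟩) fun ⟨Z, hZ⟩ => ⟨Z.lift h, hZ.lift h⟩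

lemma hasMonochromatic_dependsOn (p q k M : ℕ) :
    DependsOn (HasMonochromatic p q k M) (Set.range (BTri.toSet : BTri M k → Finset ℕ)) := by
  intro χ χ' h
  have hS (S : BTri M k) : χ S.toSet = χ' S.toSet := h _ ⟨S, rfl⟩
  simp only [HasMonochromatic, BTri.IsMonochromatic, hS]

lemma exists_hasMonochromatic (p q k : ℕ) (χ : Finset ℕ → Bool) :
    ∃ M, HasMonochromatic p q k M χ := by
  obtain ⟨Y, -, hY, c, hc⟩ :=
    exists_infinite_homogeneous (fun u : Shape k → ℕ => χ (encSet u)) Set.infinite_univ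
  have key (n : ℕ) : ∃ M, ∃ Z : BTri M n, Z.IsMonochromatic k χ c := by
    have := hY.to_subtype
    obtain ⟨w⟩ := nonempty_orderEmbedding_of_finite_infinite (Shape n) Y
    let u (x : Shape n) : ℕ := w x
    have hu : StrictMono u := (Subtype.strictMono_coe _).comp w.strictMono
    refine ⟨Finset.univ.sup u, BTri.ofEnc u hu fun x => Finset.le_sup (Finset.mem_univ x),
      fun S hS => ?_⟩
    obtain ⟨σ, hσ, hSσ⟩ := BTri.exists_strictMono_of_le_ofEnc hS
    rw [hSσ]
    exact hc _ (hu.comp hσ) fun x => (w (σ x)).2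
  cases c
  · obtain ⟨M, Z, hZ⟩ := key q
    exact ⟨M, Or.inr ⟨Z, hZ⟩⟩
  · obtain ⟨M, Z, hZ⟩ := key p
    exact ⟨M, Or.inl ⟨Z, hZ⟩⟩

lemma hasMonochromatic_R1 (p q k : ℕ) (χ : Finset ℕ → Bool) :
    HasMonochromatic p q k (R1 p q k) χ := by
  obtain ⟨M, hM⟩ := exists_forall_of_dependsOn (G := fun M => HasMonochromatic p q k M)
    (fun _ _ h χ => HasMonochromatic.mono h)
    (fun M => ⟨_, Set.finite_range _, hasMonochromatic_dependsOn p q k M⟩)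
    (exists_hasMonochromatic p q k)
  have hR1 : R1 p q k ∈ {M | max p q ≤ M ∧ ∀ χ, HasMonochromatic p q k M χ} :=
    Nat.sInf_mem ⟨max (max p q) M, le_max_left _ _, fun χ => (hM χ).mono (le_max_right _ _)⟩
  exact hR1.2 χ

theorem R1_prob_lower_bound_general (p q k m : ℕ)
    (h : (brack m p : ℝ) * 2 ^ (-(brack p k : ℝ)) +
         (brack m q : ℝ) * 2 ^ (-(brack q k : ℝ)) < 1) :
    (∃ χ : Finset ℕ → Bool,
      ¬(∃ Z : BTri m p, ∀ S : BTri m k, S.le Z → χ S.toSet = true) ∧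
      ¬(∃ Z : BTri m q, ∀ S : BTri m k, S.le Z → χ S.toSet = false)) ∧
    m < R1 p q k := by
  obtain ⟨χ, hp, hq⟩ := exists_coloring_not_isMonochromatic p q k m h
  refine ⟨⟨χ, hp, hq⟩, lt_of_not_ge fun hle => ?_⟩
  exact ((hasMonochromatic_R1 p q k χ).mono hle).elim hp hq

/-- Probabilistic lower bound: if `[m,p]·2^{-[p,k]} + [m,q]·2^{-[q,k]} < 1`, then there
is a two-coloring of the `△_k`'s of the board with `m` levels in which no `△_p` has all
its `△_k`'s in color one and no `△_q` has all its `△_k`'s in color two; hence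
`R₁(p, q, k) > m`. -/
theorem R1_prob_lower_bound (p q k m : ℕ) (hkp : k ≤ p) (hpq : p ≤ q) (hqm : q ≤ m)
    (h : (brack m p : ℝ) * 2 ^ (-(brack p k : ℝ)) +
         (brack m q : ℝ) * 2 ^ (-(brack q k : ℝ)) < 1) :
    (∃ χ : Finset ℕ → Bool,
      ¬(∃ Z : BTri m p, ∀ S : BTri m k, S.le Z → χ S.toSet = true) ∧
      ¬(∃ Z : BTri m q, ∀ S : BTri m k, S.le Z → χ S.toSet = false)) ∧
    m < R1 p q k :=
  R1_prob_lower_bound_general p q k m h
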